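/- (Weak transitivity of dicut approximation.) Let G⃗_0 = G⃗ be a weighted directed graph on V, and suppose for each i ∈ [k] that G⃗_i is a (β, ε_i)-directed cut approximation of G⃗_{i−1}, where β ≥ 1, ε_i > 0, and Σ_{i∈[k]} ε_i ≤ 1/√2. Then G⃗_k is a (β, 3·Σ_{i∈[k]} ε_i)-balanced directed cut approximation of G⃗: for every β-balanced directed cut C⃗ = (U, V∖U) of G⃗, (1 − 3Σ_i ε_i)·w_{G⃗}(C⃗) ≤ w_{G⃗_k}(C⃗) ≤ (1 + 3Σ_i ε_i)·w_{G⃗}(C⃗). -/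

import Mathlib

open Matrix BigOperators

noncomputable section

/-- The 0/1 indicator matrix of a map from (edge) indices to vertices:
row `e` is the indicator of the vertex `f e`. -/
def indMat {E V : Type*} [DecidableEq V] (f : E → V) : Matrix E V ℝ :=
  Matrix.of fun e v => if f e = v then (1 : ℝ) else 0

/-- The edge–vertex transfer matrix `B = H - T` of a directed graph with head map `hd`
and tail map `tl`. -/
def transMat {E V : Type*} [DecidableEq V] (hd tl : E → V) : Matrix E V ℝ :=
  indMat hd - indMat tl

/-- The directed Laplacian `Bᵀ W H`. -/
def dirLap {E V : Type*} [Fintype E] [DecidableEq E] [DecidableEq V]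
    (hd tl : E → V) (w : E → ℝ) : Matrix V V ℝ :=
  (transMat hd tl)ᵀ * Matrix.diagonal w * indMat hd

/-- The undirected Laplacian `Bᵀ W B` of the corresponding undirected graph. -/
def undLap {E V : Type*} [Fintype E] [DecidableEq E] [DecidableEq V]
    (hd tl : E → V) (w : E → ℝ) : Matrix V V ℝ :=
  (transMat hd tl)ᵀ * Matrix.diagonal w * transMat hd tl

/-- The corresponding undirected (simple) graph of a weighted directed graph:
`u ~ v` iff `u ≠ v` and some edge of positive weight joins them (in either direction). -/
def undSG {E V : Type*} (hd tl : E → V) (w : E → ℝ) : SimpleGraph V :=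
  SimpleGraph.fromRel (fun u v => ∃ e, 0 < w e ∧ hd e = u ∧ tl e = v)

/-- Directed Laplacian for a graph whose edges are indexed by pairs of vertices. -/
def dirLapP {V : Type*} [Fintype V] [DecidableEq V] (w : V × V → ℝ) : Matrix V V ℝ :=
  dirLap Prod.fst Prod.snd w

/-- Undirected Laplacian for a graph whose edges are indexed by pairs of vertices. -/
def undLapP {V : Type*} [Fintype V] [DecidableEq V] (w : V × V → ℝ) : Matrix V V ℝ :=
  undLap Prod.fst Prod.snd w

/-- Corresponding undirected graph for edges indexed by pairs of vertices. -/
def undSGP {V : Type*} (w : V × V → ℝ) : SimpleGraph V :=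
  undSG Prod.fst Prod.snd w

/-- `B` is a Moore–Penrose pseudoinverse of `A`. -/
def IsMPInv {V : Type*} [Fintype V] (A B : Matrix V V ℝ) : Prop :=
  A * B * A = A ∧ B * A * B = B ∧ (A * B)ᵀ = A * B ∧ (B * A)ᵀ = B * A

open Classical in
/-- The Moore–Penrose pseudoinverse of a (square, real) matrix. -/
noncomputable def mpinv {V : Type*} [Fintype V] (A : Matrix V V ℝ) : Matrix V V ℝ :=
  if h : ∃ B, IsMPInv A B then h.choose else 0

open Classical in
/-- The PSD square root of a positive semidefinite matrix (junk value `0` otherwise). -/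
noncomputable def psdSqrt {V : Type*} [Fintype V] [DecidableEq V] (A : Matrix V V ℝ) :
    Matrix V V ℝ :=
  if h : A.PosSemidef then (h.1.eigenvectorUnitary : Matrix V V ℝ) *
    diagonal ((↑) ∘ (Real.sqrt ·) ∘ h.1.eigenvalues) * (star h.1.eigenvectorUnitary : Matrix V V ℝ)
  else 0

/-- `A^{†/2} = (A†)^{1/2} = (A^{1/2})†` for a PSD matrix `A`. -/
noncomputable def pinvSqrt {V : Type*} [Fintype V] [DecidableEq V] (A : Matrix V V ℝ) :
    Matrix V V ℝ :=
  mpinv (psdSqrt A)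

/-- The ℓ₂→ℓ₂ (spectral) operator norm of `A` is at most `c`. -/
def l2OpNormLE {m n : Type*} [Fintype m] [Fintype n] (A : Matrix m n ℝ) (c : ℝ) : Prop :=
  ∀ (x : m → ℝ) (y : n → ℝ),
    |x ⬝ᵥ A.mulVec y| ≤ c * Real.sqrt (∑ i, x i ^ 2) * Real.sqrt (∑ j, y j ^ 2)

/-- `|xᵀ A y| ≤ ε √((xᵀ L x)(yᵀ L y))` for all vectors `x, y`. -/
def bilinApprox {V : Type*} [Fintype V] (A L : Matrix V V ℝ) (ε : ℝ) : Prop :=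
  ∀ x y : V → ℝ,
    |x ⬝ᵥ A.mulVec y| ≤ ε * Real.sqrt ((x ⬝ᵥ L.mulVec x) * (y ⬝ᵥ L.mulVec y))

/-- Schur complement of a `(V ⊕ X) × (V ⊕ X)` matrix onto the `V`-block. -/
def schurInl {V X : Type*} [Fintype V] [Fintype X] (A : Matrix (V ⊕ X) (V ⊕ X) ℝ) :
    Matrix V V ℝ :=
  A.submatrix Sum.inl Sum.inl -
    A.submatrix Sum.inl Sum.inr * mpinv (A.submatrix Sum.inr Sum.inr) *
      A.submatrix Sum.inr Sum.inl

/-- Weight of the directed cut from `U` to `V ∖ U`. -/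
def dicutW {V : Type*} [Fintype V] [DecidableEq V] (w : V × V → ℝ) (U : Finset V) : ℝ :=
  ∑ p : V × V, if p.1 ∈ U ∧ p.2 ∉ U then w p else 0

/-- `H⃗` (with weights `wH`) is a `(β, ε)`-directed cut approximation of `G⃗` (weights `wG`). -/
def DicutApprox {V : Type*} [Fintype V] [DecidableEq V] (wG wH : V × V → ℝ)
    (β ε : ℝ) : Prop :=
  ∀ U : Finset V, U.Nonempty → U ≠ Finset.univ →
    |dicutW wH U - dicutW wG U|
      ≤ ε / Real.sqrt (β + 1) *
        Real.sqrt (dicutW wG U * (dicutW wG U + dicutW wG Uᶜ))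

set_option maxHeartbeats 1000000


lemma my_step_aux (β ε a b a' b' : ℝ) (hβ : 1 ≤ β) (hε : 0 ≤ ε)
    (ha : 0 ≤ a) (hb : 0 ≤ b) (ha' : 0 ≤ a')
    (hsa : |a' - a| ≤ ε / Real.sqrt (β+1) * Real.sqrt (a*(a+b)))
    (hsb : |b' - b| ≤ ε / Real.sqrt (β+1) * Real.sqrt (b*(a+b))) :
    Real.sqrt (a'+b') / Real.sqrt (β+1)
        ≤ (1+ε/2) * (Real.sqrt (a+b) / Real.sqrt (β+1)) ∧
    Real.sqrt a' ≤ Real.sqrt a + ε/2 * (Real.sqrt (a+b) / Real.sqrt (β+1)) ∧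
    |a' - a| ≤ ε * Real.sqrt a * (Real.sqrt (a+b) / Real.sqrt (β+1)) := by
  have hs : (0:ℝ) ≤ a + b := by linarith
  set x := Real.sqrt a with hxdef
  set y := Real.sqrt b with hydef
  set rs := Real.sqrt (a+b) with hrsdef
  set rb := Real.sqrt (β+1) with hrbdef
  have hx0 : 0 ≤ x := Real.sqrt_nonneg _
  have hy0 : 0 ≤ y := Real.sqrt_nonneg _
  have hrs0 : 0 ≤ rs := Real.sqrt_nonneg _
  have hx2 : x^2 = a := Real.sq_sqrt ha
  have hy2 : y^2 = b := Real.sq_sqrt hb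
  have hrs2 : rs^2 = a + b := Real.sq_sqrt hs
  have hrb2 : rb^2 = β + 1 := Real.sq_sqrt (by linarith)
  have hrbpos : 0 < rb := Real.sqrt_pos.mpr (by linarith)
  have hma : Real.sqrt (a*(a+b)) = x * rs := Real.sqrt_mul ha _
  have hmb : Real.sqrt (b*(a+b)) = y * rs := Real.sqrt_mul hb _
  have hea : ε / rb * (x * rs) = ε * x * (rs / rb) := by field_simp
  have heb : ε / rb * (y * rs) = ε * y * (rs / rb) := by field_simp
  have hiii : |a' - a| ≤ ε * x * (rs / rb) := by rw [hma, hea] at hsa; exact hsa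
  have hiiib : |b' - b| ≤ ε * y * (rs / rb) := by rw [hmb, heb] at hsb; exact hsb
  have hqnn : 0 ≤ rs / rb := by positivity
  have haub : a' ≤ a + ε * x * (rs/rb) := by
    have := abs_le.mp hiii; linarith [this.2]
  have hbub : b' ≤ b + ε * y * (rs/rb) := by
    have := abs_le.mp hiiib; linarith [this.2]
  refine ⟨?_, ?_, hiii⟩
  · -- first component
    have hxy : x + y ≤ rb * rs := by
      have h1 : (x+y)^2 ≤ (rb*rs)^2 := by nlinarith [sq_nonneg (x - y), mul_nonneg (by linarith : (0:ℝ) ≤ β - 1) hs]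
      calc x + y = Real.sqrt ((x+y)^2) := (Real.sqrt_sq (by positivity)).symm
        _ ≤ Real.sqrt ((rb*rs)^2) := Real.sqrt_le_sqrt h1
        _ = rb * rs := Real.sqrt_sq (by positivity)
    have hkey : ε * (x + y) * (rs/rb) ≤ ε * (a+b) := by
      have h2 : (x+y) * (rs/rb) ≤ (rb*rs) * (rs/rb) :=
        mul_le_mul_of_nonneg_right hxy hqnn
      have h3 : (rb*rs) * (rs/rb) = a + b := by
        have he : rb * rs * (rs/rb) = rs^2 * (rb/rb) := by ring
        rw [he, div_self hrbpos.ne', mul_one, hrs2]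
      calc ε * (x + y) * (rs/rb) = ε * ((x+y) * (rs/rb)) := by ring
        _ ≤ ε * ((rb*rs) * (rs/rb)) := mul_le_mul_of_nonneg_left h2 hε
        _ = ε * (a+b) := by rw [h3]
    have hs' : a' + b' ≤ (1+ε) * (a+b) := by nlinarith
    have h4 : Real.sqrt (a'+b') ≤ (1+ε/2) * rs := by
      calc Real.sqrt (a'+b') ≤ Real.sqrt ((1+ε)*(a+b)) := Real.sqrt_le_sqrt hs'
        _ = Real.sqrt (1+ε) * rs := Real.sqrt_mul (by linarith) _
        _ ≤ (1+ε/2) * rs := by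
            have : Real.sqrt (1+ε) ≤ 1+ε/2 := by
              calc Real.sqrt (1+ε) ≤ Real.sqrt ((1+ε/2)^2) := Real.sqrt_le_sqrt (by nlinarith)
                _ = 1+ε/2 := Real.sqrt_sq (by linarith)
            exact mul_le_mul_of_nonneg_right this hrs0
    rw [div_le_iff₀ hrbpos]
    calc Real.sqrt (a'+b') ≤ (1+ε/2) * rs := h4
      _ = (1+ε/2) * (rs/rb) * rb := by
          rw [mul_assoc, div_mul_cancel₀ _ hrbpos.ne']
  · -- second component
    have hsq : a' ≤ (x + ε/2 * (rs/rb))^2 := by nlinarith [sq_nonneg (ε/2*(rs/rb))]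
    calc Real.sqrt a' ≤ Real.sqrt ((x + ε/2 * (rs/rb))^2) := Real.sqrt_le_sqrt hsq
      _ = x + ε/2 * (rs/rb) := Real.sqrt_sq (by positivity)


lemma my_aux_seq (β : ℝ) (hβ : 1 ≤ β) (k : ℕ) (a b ε : ℕ → ℝ)
    (ha : ∀ n, 0 ≤ a n) (hb : ∀ n, 0 ≤ b n)
    (hε : ∀ i, i < k → 0 < ε i)
    (hT : ∑ i ∈ Finset.range k, ε i ≤ 1 / Real.sqrt 2)
    (hbal : b 0 ≤ β * a 0)
    (hsa : ∀ i, i < k → |a (i+1) - a i|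
        ≤ ε i / Real.sqrt (β+1) * Real.sqrt (a i * (a i + b i)))
    (hsb : ∀ i, i < k → |b (i+1) - b i|
        ≤ ε i / Real.sqrt (β+1) * Real.sqrt (b i * (a i + b i))) :
    |a k - a 0| ≤ 3 * (∑ i ∈ Finset.range k, ε i) * a 0 := by
  set T : ℕ → ℝ := fun n => ∑ i ∈ Finset.range n, ε i with hTdef
  have hTn0 : ∀ n, n ≤ k → 0 ≤ T n := fun n hn =>
    Finset.sum_nonneg fun i hi => (hε i (lt_of_lt_of_le (Finset.mem_range.mp hi) hn)).le
  have hTnk : ∀ n, n ≤ k → T n ≤ T k := by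
    intro n hn
    exact Finset.sum_le_sum_of_subset_of_nonneg
      (Finset.range_subset_range.mpr hn)
      (fun i hi _ => (hε i (Finset.mem_range.mp hi)).le)
  have hs2pos : (0:ℝ) < Real.sqrt 2 := Real.sqrt_pos.mpr (by norm_num)
  have hTk0 : 0 ≤ T k := hTn0 k le_rfl
  have hTk2 : (T k)^2 ≤ 1/2 := by
    have h1 : (T k)^2 ≤ (1/Real.sqrt 2)^2 := by
      apply pow_le_pow_left₀ hTk0 hT
    have h2 : (1/Real.sqrt 2)^2 = 1/2 := by
      rw [div_pow, one_pow, Real.sq_sqrt (by norm_num : (0:ℝ) ≤ 2)]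
    linarith [h1, h2.le]
  have hTk67 : T k ≤ 6/7 := by nlinarith
  have hTk1 : T k ≤ 1 := by linarith
  set rb := Real.sqrt (β+1) with hrbdef
  have hrbpos : 0 < rb := Real.sqrt_pos.mpr (by linarith)
  set q0 := Real.sqrt (a 0 + b 0) / rb with hq0def
  set X0 := Real.sqrt (a 0) with hX0def
  have hX00 : 0 ≤ X0 := Real.sqrt_nonneg _
  have hq00 : 0 ≤ q0 := by positivity
  have hX02 : X0^2 = a 0 := Real.sq_sqrt (ha 0)
  have hq0X0 : q0 ≤ X0 := by
    rw [hq0def, div_le_iff₀ hrbpos]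
    calc Real.sqrt (a 0 + b 0) ≤ Real.sqrt ((β+1) * a 0) := Real.sqrt_le_sqrt (by linarith)
      _ = rb * X0 := Real.sqrt_mul (by linarith) _
      _ = X0 * rb := mul_comm _ _
  have main : ∀ n, n ≤ k →
      Real.sqrt (a n + b n) / rb ≤ (1 + T n) * q0 ∧
      Real.sqrt (a n) ≤ X0 + (T n * (1 + T k) / 2) * q0 ∧
      |a n - a 0| ≤ 3 * T n * a 0 := by
    intro n
    induction n with
    | zero =>
      intro _
      have hT0 : T 0 = 0 := by simp [hTdef]
      rw [hT0]
      refine ⟨le_of_eq (by rw [add_zero, one_mul]), by simp; exact le_refl _, by simp⟩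
    | succ n ih =>
      intro hn1
      have hnk : n < k := hn1
      obtain ⟨ihq, ihx, iha⟩ := ih hnk.le
      obtain ⟨st1, st2, st3⟩ := my_step_aux β (ε n) (a n) (b n) (a (n+1)) (b (n+1)) hβ
        (hε n hnk).le (ha n) (hb n) (ha _) (hsa n hnk) (hsb n hnk)
      have hTsucc : T (n+1) = T n + ε n := Finset.sum_range_succ ε n
      have hqn0 : 0 ≤ Real.sqrt (a n + b n) / rb := by positivity
      have hXn0 : 0 ≤ Real.sqrt (a n) := Real.sqrt_nonneg _
      have hTn' : 0 ≤ T n := hTn0 n hnk.le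
      have hTnTk : T n ≤ T k := hTnk n hnk.le
      have hTn1Tk : T (n+1) ≤ T k := hTnk (n+1) hn1
      have hεn : 0 < ε n := hε n hnk
      refine ⟨?_, ?_, ?_⟩
      · calc Real.sqrt (a (n+1) + b (n+1)) / rb
            ≤ (1 + ε n/2) * (Real.sqrt (a n + b n) / rb) := st1
          _ ≤ (1 + ε n/2) * ((1 + T n) * q0) := by
              apply mul_le_mul_of_nonneg_left ihq (by linarith)
          _ ≤ (1 + T (n+1)) * q0 := by
              rw [hTsucc]
              nlinarith [mul_nonneg (mul_nonneg hεn.le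
                (by linarith : (0:ℝ) ≤ 1 - T n)) hq00]
      · calc Real.sqrt (a (n+1))
            ≤ Real.sqrt (a n) + ε n/2 * (Real.sqrt (a n + b n) / rb) := st2
          _ ≤ (X0 + (T n * (1 + T k) / 2) * q0) + ε n/2 * ((1 + T n) * q0) := by
              have := mul_le_mul_of_nonneg_left ihq (by linarith : (0:ℝ) ≤ ε n / 2)
              linarith
          _ ≤ X0 + (T (n+1) * (1 + T k) / 2) * q0 := by
              rw [hTsucc]
              nlinarith [mul_nonneg (mul_nonneg hεn.le
                (sub_nonneg.mpr hTnTk)) hq00]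
      · have h5 : T n * (1 + T k) * q0 ≤ T k * (1 + T k) * X0 :=
          mul_le_mul (mul_le_mul_of_nonneg_right hTnTk (by linarith)) hq0X0 hq00
            (by positivity)
        have hXnb : Real.sqrt (a n) ≤ (1 + T k * (1 + T k) / 2) * X0 := by
          nlinarith [h5]
        have hqnb : Real.sqrt (a n + b n) / rb ≤ (1 + T k) * X0 := by
          have h6 : (1 + T n) * q0 ≤ (1 + T k) * X0 :=
            mul_le_mul (by linarith) hq0X0 hq00 (by linarith)
          linarith
        have hprod : Real.sqrt (a n) * (Real.sqrt (a n + b n) / rb)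
            ≤ ((1 + T k * (1 + T k) / 2) * X0) * ((1 + T k) * X0) := by
          apply mul_le_mul hXnb hqnb hqn0 (by positivity)
        have hc : (1 + T k * (1 + T k) / 2) * (1 + T k) ≤ 3 := by nlinarith
        have hfin : Real.sqrt (a n) * (Real.sqrt (a n + b n) / rb) ≤ 3 * a 0 := by
          calc Real.sqrt (a n) * (Real.sqrt (a n + b n) / rb)
              ≤ ((1 + T k * (1 + T k) / 2) * X0) * ((1 + T k) * X0) := hprod
            _ = (1 + T k * (1 + T k) / 2) * (1 + T k) * (a 0) := by rw [← hX02]; ring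
            _ ≤ 3 * a 0 := by nlinarith [ha 0]
        have htri : |a (n+1) - a 0| ≤ |a (n+1) - a n| + |a n - a 0| := abs_sub_le _ _ _
        have hst3' : |a (n+1) - a n| ≤ ε n * (3 * a 0) := by
          calc |a (n+1) - a n| ≤ ε n * Real.sqrt (a n) * (Real.sqrt (a n + b n) / rb) := st3
            _ = ε n * (Real.sqrt (a n) * (Real.sqrt (a n + b n) / rb)) := by ring
            _ ≤ ε n * (3 * a 0) := mul_le_mul_of_nonneg_left hfin hεn.le
        rw [hTsucc]
        calc |a (n+1) - a 0| ≤ |a (n+1) - a n| + |a n - a 0| := htri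
          _ ≤ ε n * (3 * a 0) + 3 * T n * a 0 := by linarith
          _ = 3 * (T n + ε n) * a 0 := by ring
  obtain ⟨_, _, h⟩ := main k le_rfl
  exact h

/-- weak transitivity of dicut approximation. -/
theorem stmt_16 {V : Type*} [Fintype V] [DecidableEq V] (k : ℕ)
    (w : Fin (k + 1) → V × V → ℝ) (hw : ∀ i p, 0 ≤ w i p)
    (β : ℝ) (hβ : 1 ≤ β)
    (ε : Fin k → ℝ) (hε : ∀ i, 0 < ε i) (hsum : ∑ i, ε i ≤ 1 / Real.sqrt 2)
    (happrox : ∀ i : Fin k, DicutApprox (w i.castSucc) (w i.succ) β (ε i)) :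
    ∀ U : Finset V, U.Nonempty → U ≠ Finset.univ →
      ((1 / β) * dicutW (w 0) Uᶜ ≤ dicutW (w 0) U ∧
        dicutW (w 0) U ≤ β * dicutW (w 0) Uᶜ) →
      (1 - 3 * ∑ i, ε i) * dicutW (w 0) U ≤ dicutW (w (Fin.last k)) U ∧
      dicutW (w (Fin.last k)) U ≤ (1 + 3 * ∑ i, ε i) * dicutW (w 0) U := by
  intro U hU hU' hbalU
  have hβ0 : (0:ℝ) < β := by linarith
  have hUc : Uᶜ.Nonempty := by
    rw [← Finset.compl_ne_univ_iff_nonempty, compl_compl]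
    exact hU'
  have hUc' : Uᶜ ≠ Finset.univ := by
    intro h
    obtain ⟨u, hu⟩ := hU
    have := Finset.mem_univ u
    rw [← h, Finset.mem_compl] at this
    exact this hu
  have hdnn : ∀ (i : Fin (k+1)) (S : Finset V), 0 ≤ dicutW (w i) S := by
    intro i S
    apply Finset.sum_nonneg
    intro p _
    split
    · exact hw i p
    · exact le_refl 0
  set A : ℕ → ℝ := fun n => if h : n < k+1 then dicutW (w ⟨n, h⟩) U else 0 with hAdef
  set B : ℕ → ℝ := fun n => if h : n < k+1 then dicutW (w ⟨n, h⟩) Uᶜ else 0 with hBdef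
  set E : ℕ → ℝ := fun n => if h : n < k then ε ⟨n, h⟩ else 1 with hEdef
  have hAnn : ∀ n, 0 ≤ A n := by
    intro n; rw [hAdef]; dsimp only; split
    · exact hdnn _ _
    · exact le_refl 0
  have hBnn : ∀ n, 0 ≤ B n := by
    intro n; rw [hBdef]; dsimp only; split
    · exact hdnn _ _
    · exact le_refl 0
  have hEpos : ∀ i, i < k → 0 < E i := by
    intro i h; rw [hEdef]; dsimp only; rw [dif_pos h]; exact hε _
  have hsumE : ∑ i ∈ Finset.range k, E i = ∑ i, ε i := by
    rw [← Fin.sum_univ_eq_sum_range]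
    exact Finset.sum_congr rfl fun i _ => by rw [hEdef]; dsimp only; rw [dif_pos i.isLt]
  have hA0 : A 0 = dicutW (w 0) U := by
    rw [hAdef]; dsimp only; rw [dif_pos (Nat.succ_pos k)]; rfl
  have hB0 : B 0 = dicutW (w 0) Uᶜ := by
    rw [hBdef]; dsimp only; rw [dif_pos (Nat.succ_pos k)]; rfl
  have hAk : A k = dicutW (w (Fin.last k)) U := by
    rw [hAdef]; dsimp only; rw [dif_pos (Nat.lt_succ_self k)]; rfl
  have hbal : B 0 ≤ β * A 0 := by
    rw [hA0, hB0]
    have h := hbalU.1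
    rw [one_div, inv_mul_le_iff₀ hβ0] at h
    exact h
  have hstepA : ∀ i, i < k → |A (i+1) - A i|
      ≤ E i / Real.sqrt (β+1) * Real.sqrt (A i * (A i + B i)) := by
    intro i hik
    have h1 : i < k+1 := by omega
    have h2 : i+1 < k+1 := by omega
    have happ := happrox ⟨i, hik⟩ U hU hU'
    simp only [Fin.succ_mk, Fin.castSucc_mk] at happ
    rw [hAdef, hBdef, hEdef]; dsimp only
    simp only [dif_pos h1, dif_pos h2, dif_pos hik]
    exact happ
  have hstepB : ∀ i, i < k → |B (i+1) - B i|
      ≤ E i / Real.sqrt (β+1) * Real.sqrt (B i * (A i + B i)) := by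
    intro i hik
    have h1 : i < k+1 := by omega
    have h2 : i+1 < k+1 := by omega
    have happ := happrox ⟨i, hik⟩ Uᶜ hUc hUc'
    rw [compl_compl] at happ
    simp only [Fin.succ_mk, Fin.castSucc_mk] at happ
    rw [hAdef, hBdef, hEdef]; dsimp only
    simp only [dif_pos h1, dif_pos h2, dif_pos hik]
    rw [add_comm (dicutW (w ⟨i, h1⟩) U) (dicutW (w ⟨i, h1⟩) Uᶜ)]
    exact happ
  have habs := my_aux_seq β hβ k A B E hAnn hBnn hEpos (by rw [hsumE]; exact hsum)
    hbal hstepA hstepB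
  rw [hsumE, hA0, hAk] at habs
  obtain ⟨h1, h2⟩ := abs_le.mp habs
  constructor <;> nlinarith [hdnn 0 U]


end
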